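/- arXiv:2311.18048 — 2 statements merged into one kernel-verified Lean document; each statement's English description precedes it below -/
import Mathlib

section
/- Let T and T̃ be invertible n×n real matrices and let σ_i^e > 0 for environments e ∈ {0,...,E−1} and indices i ∈ {1,...,n}. Suppose that for all y ∈ ℝ^n and all e, Σ_{i=1}^n ((T⁻¹y)_i² − (T̃⁻¹y)_i²)(1/(σ_i^e)² − 1/(σ_i^0)²) = 0, and suppose the matrix Λ with entries Λ_{e,i} = 1/(σ_i^e)² − 1/(σ_i^0)² has full column rank n. Then H = T̃⁻¹T is a scaled permutation matrix, i.e., H = PD for a permutation matrix P and invertible diagonal matrix D. -/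
/-!
Since `Λ` has full column rank, the identity for a fixed `y` (one linear equation in the vector
`((T⁻¹y)ᵢ² - (T̃⁻¹y)ᵢ²)ᵢ` per environment) forces `(T⁻¹y)ᵢ² = (T̃⁻¹y)ᵢ²` for every `i`.
Substituting `y = T u` gives `((H u)ᵢ)² = uᵢ²` for `H = T̃⁻¹T` and all `u`; on the basis vectors this
says `Hᵢⱼ² = δᵢⱼ`, so `H` is diagonal with entries `±1`, a scaled permutation with `P = 1`.
-/

open Matrix

theorem Matrix.mulVec_injective_of_rank_eq_card {R m n : Type*} [CommRing R] [Nontrivial R]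
    [Fintype n] {A : Matrix m n R} (hA : A.rank = Fintype.card n) :
    Function.Injective A.mulVec :=
  mulVec_injective_iff.mpr <| linearIndependent_iff_card_eq_finrank_span.mpr <| by
    rw [← hA, rank_eq_finrank_span_cols, Set.finrank]

theorem Matrix.exists_eq_diagonal_of_mulVec_sq_eq {R n : Type*} [CommRing R] [NoZeroDivisors R]
    [Fintype n] [DecidableEq n] (H : Matrix n n R) (hH : ∀ u i, (H *ᵥ u) i ^ 2 = u i ^ 2) :
    ∃ d : n → R, (∀ i, d i ^ 2 = 1) ∧ H = diagonal d := by
  have hentry : ∀ i j, H i j ^ 2 = (1 : Matrix n n R) i j ^ 2 := fun i j => by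
    simpa [mulVec_single_one, one_apply, Pi.single_apply] using hH (Pi.single j 1) i
  refine ⟨fun i => H i i, fun i => by simpa using hentry i i, ?_⟩
  ext i j
  rcases eq_or_ne i j with rfl | hij
  · simp
  · simpa [hij] using hentry i j

theorem lti_identifiability_core_general (n E : ℕ) [NeZero E]
    (T T' : Matrix (Fin n) (Fin n) ℝ)
    (hT : IsUnit T.det)
    (σ : Fin E → Fin n → ℝ)
    (hvar : ∀ (y : Fin n → ℝ) (e : Fin E),
      ∑ i : Fin n, ((T⁻¹.mulVec y i) ^ 2 - (T'⁻¹.mulVec y i) ^ 2) *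
        (1 / (σ e i) ^ 2 - 1 / (σ 0 i) ^ 2) = 0)
    (hrank : (Matrix.of fun (e : Fin E) (i : Fin n) =>
        1 / (σ e i) ^ 2 - 1 / (σ 0 i) ^ 2).rank = n) :
    ∃ (π : Equiv.Perm (Fin n)) (d : Fin n → ℝ), (∀ i, d i ≠ 0) ∧
      T'⁻¹ * T = (Equiv.Perm.permMatrix ℝ π) * Matrix.diagonal d := by
  have hsq : ∀ y i, (T⁻¹ *ᵥ y) i ^ 2 = (T'⁻¹ *ᵥ y) i ^ 2 := fun y => by
    have hzero : (fun i => (T⁻¹ *ᵥ y) i ^ 2 - (T'⁻¹ *ᵥ y) i ^ 2) = 0 :=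
      mulVec_injective_of_rank_eq_card (by rwa [Fintype.card_fin]) <| by
        ext e
        simpa [mulVec, dotProduct, mul_comm] using hvar y e
    exact fun i => sub_eq_zero.mp (congrFun hzero i)
  obtain ⟨d, hd, hH⟩ := exists_eq_diagonal_of_mulVec_sq_eq (T'⁻¹ * T) fun u i => by
    simpa [mulVec_mulVec, nonsing_inv_mul T hT] using (hsq (T *ᵥ u) i).symm
  exact ⟨1, d, fun i hi => by simpa [hi] using hd i, by rwa [Matrix.permMatrix_one, one_mul]⟩

theorem lti_identifiability_core (n E : ℕ) [NeZero E]
    (T T' : Matrix (Fin n) (Fin n) ℝ)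
    (hT : IsUnit T.det) (hT' : IsUnit T'.det)
    (σ : Fin E → Fin n → ℝ) (hσ : ∀ e i, 0 < σ e i)
    (hvar : ∀ (y : Fin n → ℝ) (e : Fin E),
      ∑ i : Fin n, ((T⁻¹.mulVec y i) ^ 2 - (T'⁻¹.mulVec y i) ^ 2) *
        (1 / (σ e i) ^ 2 - 1 / (σ 0 i) ^ 2) = 0)
    (hrank : (Matrix.of fun (e : Fin E) (i : Fin n) =>
        1 / (σ e i) ^ 2 - 1 / (σ 0 i) ^ 2).rank = n) :
    ∃ (π : Equiv.Perm (Fin n)) (d : Fin n → ℝ), (∀ i, d i ≠ 0) ∧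
      T'⁻¹ * T = (Equiv.Perm.permMatrix ℝ π) * Matrix.diagonal d :=
  lti_identifiability_core_general n E T T' hT σ hvar hrank
end

section
/- Suppose two transfer functions agree: C(zI − A)⁻¹B = C'(zI − A')⁻¹B' for all z in a neighborhood of infinity, where both systems are controllable and observable with the same state dimension n. Then there exists an invertible matrix P with A' = PAP⁻¹, B' = PB, C' = CP⁻¹. -/
open Matrix

/-- Controllability matrix. -/
def ctrbMat (n m : ℕ) (A : Matrix (Fin n) (Fin n) ℝ) (B : Matrix (Fin n) (Fin m) ℝ) :
    Matrix (Fin n) (Fin n × Fin m) ℝ :=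
  fun i q => (A ^ (q.1 : ℕ) * B) i q.2

/-- Observability matrix. -/
def obsvMat (n p : ℕ) (A : Matrix (Fin n) (Fin n) ℝ) (C : Matrix (Fin p) (Fin n) ℝ) :
    Matrix (Fin n × Fin p) (Fin n) ℝ :=
  fun q j => (C * A ^ (q.1 : ℕ)) q.2 j

/-!
Since `z • (z • 1 - A)⁻¹ = (1 - z⁻¹ • A)⁻¹ → 1` as `z → ∞`, the transfer function determines `C B`,
and the identity `A (z • 1 - A)⁻¹ = z • (z • 1 - A)⁻¹ - 1` passes from `C A ^ k (z • 1 - A)⁻¹ B` to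
`C A ^ (k + 1) (z • 1 - A)⁻¹ B`; so equal transfer functions have equal Markov parameters `C A ^ k B`.
These are the blocks of the Hankel matrices `O A ^ j K = O' A' ^ j K'`, with `O`, `K` the observability
and controllability matrices. For a left inverse `L` of `O'` and a right inverse `S` of `K'`, the matrix
`P = L O` has inverse `K S` because `L O K S = L O' K' S = 1`; in the same way `P A (K S) = A'`,
`P K = K'` and `O (K S) = O'`, whose first block column and row give `B' = P B` and `C' = C P⁻¹`.
-/

open Filter Topology

section Resolvent

variable {n n' ι κ : Type*} [Fintype n] [DecidableEq n] [Fintype n'] [DecidableEq n']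

lemma eventually_isUnit_det_smul_one_sub (A : Matrix n n ℝ) :
    ∀ᶠ z : ℝ in atTop, IsUnit (z • (1 : Matrix n n ℝ) - A).det := by
  filter_upwards [Polynomial.eventually_atTop_not_isRoot _ A.charpoly_monic.ne_zero] with z hz
  rw [isUnit_iff_ne_zero, smul_one_eq_diagonal, ← scalar_apply, ← eval_charpoly]
  exact hz

lemma tendsto_smul_inv_smul_one_sub (A : Matrix n n ℝ) :
    Tendsto (fun z : ℝ => z • (z • (1 : Matrix n n ℝ) - A)⁻¹) atTop (𝓝 1) := by
  have hinv : ContinuousAt Inv.inv (1 : Matrix n n ℝ) :=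
    continuousAt_matrix_inv 1 (by simp [Ring.inverse_eq_inv'])
  have hlim : Tendsto (fun z : ℝ => 1 - z⁻¹ • A) atTop (𝓝 1) := by
    simpa using tendsto_const_nhds.sub ((tendsto_inv_atTop_zero (𝕜 := ℝ)).smul_const A)
  have hlim_inv : Tendsto (fun z : ℝ => (1 - z⁻¹ • A)⁻¹) atTop (𝓝 1) := by
    simpa [Function.comp_def] using hinv.tendsto.comp hlim
  refine hlim_inv.congr' ?_
  filter_upwards [eventually_gt_atTop 0, eventually_isUnit_det_smul_one_sub A] with z hz hA
  have h : 1 - z⁻¹ • A = z⁻¹ • (z • 1 - A) := by rw [smul_sub, inv_smul_smul₀ hz.ne']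
  refine inv_eq_left_inv (A := 1 - z⁻¹ • A) ?_
  rw [h, smul_mul_smul_comm, mul_inv_cancel₀ hz.ne', one_smul, nonsing_inv_mul _ hA]

lemma mul_mul_inv_smul_one_sub_mul {A : Matrix n n ℝ} {z : ℝ}
    (h : IsUnit (z • (1 : Matrix n n ℝ) - A).det) (X : Matrix ι n ℝ) (Y : Matrix n κ ℝ) :
    X * A * (z • 1 - A)⁻¹ * Y = z • (X * (z • 1 - A)⁻¹ * Y) - X * Y := by
  have hA : A * (z • 1 - A)⁻¹ = z • (z • 1 - A)⁻¹ - 1 := by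
    calc A * (z • 1 - A)⁻¹ = z • 1 * (z • 1 - A)⁻¹ - (z • 1 - A) * (z • 1 - A)⁻¹ := by
          rw [← Matrix.sub_mul, sub_sub_cancel]
      _ = z • (z • 1 - A)⁻¹ - 1 := by rw [mul_nonsing_inv _ h, Matrix.smul_mul, Matrix.one_mul]
  rw [Matrix.mul_assoc X, hA, Matrix.mul_sub, Matrix.sub_mul, Matrix.mul_smul, Matrix.smul_mul,
    Matrix.mul_one]

lemma tendsto_smul_mul_inv_smul_one_sub_mul (A : Matrix n n ℝ) (X : Matrix ι n ℝ)
    (Y : Matrix n κ ℝ) :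
    Tendsto (fun z : ℝ => z • (X * (z • 1 - A)⁻¹ * Y)) atTop (𝓝 (X * Y)) := by
  have hc : Continuous fun M : Matrix n n ℝ => X * M * Y :=
    (continuous_const.matrix_mul continuous_id).matrix_mul continuous_const
  simpa [Function.comp_def, Matrix.mul_smul, Matrix.smul_mul] using
    (hc.tendsto 1).comp (tendsto_smul_inv_smul_one_sub A)

lemma mul_eq_of_eventually_mul_inv_smul_one_sub_mul_eq {A : Matrix n n ℝ} {A' : Matrix n' n' ℝ}
    {X : Matrix ι n ℝ} {Y : Matrix n κ ℝ} {X' : Matrix ι n' ℝ} {Y' : Matrix n' κ ℝ}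
    (h : ∀ᶠ z : ℝ in atTop, X * (z • 1 - A)⁻¹ * Y = X' * (z • 1 - A')⁻¹ * Y') :
    X * Y = X' * Y' :=
  tendsto_nhds_unique (tendsto_smul_mul_inv_smul_one_sub_mul A X Y)
    ((tendsto_smul_mul_inv_smul_one_sub_mul A' X' Y').congr' (h.mono fun z hz => by simp only [hz]))

theorem mul_pow_mul_eq_of_eventually_mul_inv_smul_one_sub_mul_eq {A : Matrix n n ℝ}
    {A' : Matrix n' n' ℝ} {B : Matrix n κ ℝ} {B' : Matrix n' κ ℝ} {C : Matrix ι n ℝ}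
    {C' : Matrix ι n' ℝ}
    (h : ∀ᶠ z : ℝ in atTop, C * (z • 1 - A)⁻¹ * B = C' * (z • 1 - A')⁻¹ * B') (k : ℕ) :
    C * A ^ k * B = C' * A' ^ k * B' := by
  suffices hres : ∀ k : ℕ, ∀ᶠ z : ℝ in atTop,
      C * A ^ k * (z • 1 - A)⁻¹ * B = C' * A' ^ k * (z • 1 - A')⁻¹ * B' from
    mul_eq_of_eventually_mul_inv_smul_one_sub_mul_eq (hres k)
  intro k
  induction k with
  | zero => simpa using h
  | succ k ih =>
    filter_upwards [ih, eventually_isUnit_det_smul_one_sub A, eventually_isUnit_det_smul_one_sub A']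
      with z hz hA hA'
    rw [pow_succ, pow_succ, ← Matrix.mul_assoc, ← Matrix.mul_assoc, mul_mul_inv_smul_one_sub_mul hA,
      mul_mul_inv_smul_one_sub_mul hA', hz, mul_eq_of_eventually_mul_inv_smul_one_sub_mul_eq ih]

end Resolvent

namespace Matrix

variable {K ι n : Type*} [Field K] [Fintype ι] [Fintype n] [DecidableEq n]

theorem exists_mul_eq_one_of_rank_eq_card_width {M : Matrix ι n K}
    (h : M.rank = Fintype.card n) : ∃ L : Matrix n ι K, L * M = 1 := by
  classical
  have hker : LinearMap.ker M.mulVecLin = ⊥ := by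
    have := LinearMap.finrank_range_add_finrank_ker M.mulVecLin
    rw [← rank, h, Module.finrank_fintype_fun_eq_card] at this
    exact Submodule.finrank_eq_zero.mp (by omega)
  obtain ⟨g, hg⟩ := M.mulVecLin.exists_leftInverse_of_injective hker
  refine ⟨LinearMap.toMatrix' g, ?_⟩
  rw [← LinearMap.toMatrix'_toLin' M, ← LinearMap.toMatrix'_comp, toLin'_apply', hg,
    LinearMap.toMatrix'_id]

theorem exists_mul_eq_one_of_rank_eq_card_height {M : Matrix n ι K}
    (h : M.rank = Fintype.card n) : ∃ S : Matrix ι n K, M * S = 1 := by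
  obtain ⟨L, hL⟩ := exists_mul_eq_one_of_rank_eq_card_width (M := Mᵀ) (by rwa [rank_transpose])
  exact ⟨Lᵀ, by simpa using congrArg transpose hL⟩

end Matrix

section KalmanMatrices

variable {n m p : ℕ} {A A' : Matrix (Fin n) (Fin n) ℝ} {B B' : Matrix (Fin n) (Fin m) ℝ}
  {C C' : Matrix (Fin p) (Fin n) ℝ}

lemma mul_ctrbMat_apply {ι : Type*} (X : Matrix ι (Fin n) ℝ) (i : ι) (q : Fin n × Fin m) :
    (X * ctrbMat n m A B) i q = (X * (A ^ (q.1 : ℕ) * B)) i q.2 := by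
  simp [ctrbMat, mul_apply]

lemma obsvMat_mul_apply {κ : Type*} (X : Matrix (Fin n) κ ℝ) (q : Fin n × Fin p) (j : κ) :
    (obsvMat n p A C * X) q j = (C * A ^ (q.1 : ℕ) * X) q.2 j := by
  simp [obsvMat, mul_apply]

lemma mul_eq_of_mul_ctrbMat_eq {P : Matrix (Fin n) (Fin n) ℝ}
    (h : P * ctrbMat n m A B = ctrbMat n m A' B') : P * B = B' := by
  ext i j
  simpa [mul_ctrbMat_apply, ctrbMat] using congr_fun₂ h i (⟨0, i.pos⟩, j)

lemma mul_eq_of_obsvMat_mul_eq {Q : Matrix (Fin n) (Fin n) ℝ}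
    (h : obsvMat n p A C * Q = obsvMat n p A' C') : C * Q = C' := by
  ext i j
  simpa [obsvMat_mul_apply, obsvMat] using congr_fun₂ h (⟨0, j.pos⟩, i) j

lemma obsvMat_mul_pow_mul_ctrbMat_eq (h : ∀ k : ℕ, C * A ^ k * B = C' * A' ^ k * B') (j : ℕ) :
    obsvMat n p A C * A ^ j * ctrbMat n m A B = obsvMat n p A' C' * A' ^ j * ctrbMat n m A' B' := by
  ext a b
  simp only [mul_ctrbMat_apply, Matrix.mul_assoc, obsvMat_mul_apply]
  simp only [← Matrix.mul_assoc, ← pow_add, h]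

end KalmanMatrices

theorem minimal_realizations_similar_general (n m p : ℕ)
    (A A' : Matrix (Fin n) (Fin n) ℝ) (B B' : Matrix (Fin n) (Fin m) ℝ)
    (C C' : Matrix (Fin p) (Fin n) ℝ)
    (hctrb' : (ctrbMat n m A' B').rank = n) (hobsv' : (obsvMat n p A' C').rank = n)
    (R : ℝ)
    (htf : ∀ z : ℝ, R < |z| →
      C * (z • (1 : Matrix (Fin n) (Fin n) ℝ) - A)⁻¹ * B =
        C' * (z • (1 : Matrix (Fin n) (Fin n) ℝ) - A')⁻¹ * B') :
    ∃ P : Matrix (Fin n) (Fin n) ℝ, IsUnit P.det ∧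
      A' = P * A * P⁻¹ ∧ B' = P * B ∧ C' = C * P⁻¹ := by
  have hmarkov : ∀ k : ℕ, C * A ^ k * B = C' * A' ^ k * B' :=
    mul_pow_mul_eq_of_eventually_mul_inv_smul_one_sub_mul_eq <|
      (eventually_gt_atTop R).mono fun z hz => htf z (hz.trans_le (le_abs_self z))
  have hankel := obsvMat_mul_pow_mul_ctrbMat_eq hmarkov
  have hankel0 : obsvMat n p A C * ctrbMat n m A B = obsvMat n p A' C' * ctrbMat n m A' B' := by
    simpa using hankel 0
  obtain ⟨L, hL⟩ := exists_mul_eq_one_of_rank_eq_card_width (hobsv'.trans (Fintype.card_fin n).symm)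
  obtain ⟨S, hS⟩ := exists_mul_eq_one_of_rank_eq_card_height (hctrb'.trans (Fintype.card_fin n).symm)
  set O := obsvMat n p A C
  set K := ctrbMat n m A B
  have hPK : L * O * K = ctrbMat n m A' B' := by
    rw [Matrix.mul_assoc, hankel0, ← Matrix.mul_assoc, hL, Matrix.one_mul]
  have hOQ : O * (K * S) = obsvMat n p A' C' := by
    rw [← Matrix.mul_assoc, hankel0, Matrix.mul_assoc, hS, Matrix.mul_one]
  have hPQ : L * O * (K * S) = 1 := by rw [Matrix.mul_assoc, hOQ, hL]
  have hPAQ : L * O * A * (K * S) = A' := by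
    calc L * O * A * (K * S) = L * (O * A ^ 1 * K) * S := by simp only [pow_one, Matrix.mul_assoc]
      _ = L * obsvMat n p A' C' * A' * (ctrbMat n m A' B' * S) := by
        rw [hankel 1]; simp only [pow_one, Matrix.mul_assoc]
      _ = A' := by rw [hL, hS, Matrix.one_mul, Matrix.mul_one]
  rw [← inv_eq_right_inv hPQ] at hOQ hPAQ
  exact ⟨L * O, isUnit_det_of_right_inverse hPQ, hPAQ.symm, (mul_eq_of_mul_ctrbMat_eq hPK).symm,
    (mul_eq_of_obsvMat_mul_eq hOQ).symm⟩

theorem minimal_realizations_similar (n m p : ℕ)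
    (A A' : Matrix (Fin n) (Fin n) ℝ) (B B' : Matrix (Fin n) (Fin m) ℝ)
    (C C' : Matrix (Fin p) (Fin n) ℝ)
    (hctrb : (ctrbMat n m A B).rank = n) (hobsv : (obsvMat n p A C).rank = n)
    (hctrb' : (ctrbMat n m A' B').rank = n) (hobsv' : (obsvMat n p A' C').rank = n)
    (R : ℝ)
    (htf : ∀ z : ℝ, R < |z| →
      C * (z • (1 : Matrix (Fin n) (Fin n) ℝ) - A)⁻¹ * B =
        C' * (z • (1 : Matrix (Fin n) (Fin n) ℝ) - A')⁻¹ * B') :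
    ∃ P : Matrix (Fin n) (Fin n) ℝ, IsUnit P.det ∧
      A' = P * A * P⁻¹ ∧ B' = P * B ∧ C' = C * P⁻¹ :=
  minimal_realizations_similar_general n m p A A' B B' C C' hctrb' hobsv' R htf
end
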